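/- The function u(v,w,z) = 2 log(2(z + R(v))/(1 + vw)) satisfies the Lorentzian SU(∞) Toda equation 4 u_{vw} + (e^u)_{zz} = 0 on the open set where z + R(v) > 0 and 1 + vw > 0. -/

import Mathlib

/-!
Where both arguments of the logarithm are positive, `u = 2 log(2(z + R v)) - 2 log(1 + vw)`, so
`u_w = -2v/(1 + vw)` does not involve `R` and `u_{vw} = -2/(1 + vw)²`. On the other side `eᵘ` is
the square of a function affine in `z` with slope `2/(1 + vw)`, so `(eᵘ)_{zz} = 8/(1 + vw)²`.
-/

open Real Filter Topology

lemma Real.exp_two_mul_log {x : ℝ} (hx : x ≠ 0) : exp (2 * log x) = x ^ 2 := by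
  rw [show 2 * log x = log (x ^ 2) by rw [log_pow]; norm_num, exp_log (by positivity)]

lemma hasDerivAt_log_const_div {f : ℝ → ℝ} {f' x : ℝ} (c : ℝ) (hc : c ≠ 0)
    (hf : HasDerivAt f f' x) (hx : f x ≠ 0) :
    HasDerivAt (fun y => log (c / f y)) (-f' / f x) x := by
  convert ((hasDerivAt_const x c).fun_div hf hx).log (div_ne_zero hc hx) using 1
  field_simp
  ring

lemma hasDerivAt_log_const_div_one_add_mul (c v w : ℝ) (hc : c ≠ 0) (h : 1 + v * w ≠ 0) :
    HasDerivAt (fun w' => log (c / (1 + v * w'))) (-v / (1 + v * w)) w := by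
  have hlin : HasDerivAt (fun w' => 1 + v * w') v w :=
    (((hasDerivAt_id' w).const_mul v).const_add 1).congr_deriv (mul_one v)
  exact hasDerivAt_log_const_div c hc hlin h

lemma hasDerivAt_div_one_add_mul (v w : ℝ) (h : 1 + v * w ≠ 0) :
    HasDerivAt (fun v' => v' / (1 + v' * w)) (1 / (1 + v * w) ^ 2) v := by
  have hlin : HasDerivAt (fun v' => 1 + v' * w) w v :=
    (((hasDerivAt_id' v).mul_const w).const_add 1).congr_deriv (one_mul w)
  exact ((hasDerivAt_id' v).fun_div hlin h).congr_deriv (by ring)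

lemma hasDerivAt_sq_mul_add (m q y : ℝ) :
    HasDerivAt (fun t => (m * t + q) ^ 2) (2 * m * (m * y + q)) y :=
  ((((hasDerivAt_id' y).const_mul m).add_const q).fun_pow 2).congr_deriv (by norm_num; ring)

lemma deriv_deriv_sq_mul_add (m q x : ℝ) : deriv (deriv fun y => (m * y + q) ^ 2) x = 2 * m ^ 2 := by
  have hfirst : deriv (fun y => (m * y + q) ^ 2) = fun y => 2 * m * (m * y + q) :=
    funext fun y => (hasDerivAt_sq_mul_add m q y).deriv
  rw [hfirst]
  exact ((((hasDerivAt_id' x).const_mul m).add_const q).const_mul (2 * m)).deriv.trans (by ring)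

/-- The function `u(v,w,z) = 2 log(2(z + R(v))/(1 + vw))` solves the Lorentzian
`SU(∞)` Toda equation `4 u_{vw} + (eᵘ)_{zz} = 0` on the region where
`z + R(v) > 0` and `1 + vw > 0`. -/
theorem toda_solution (R : ℝ → ℝ) (hR : ContDiff ℝ 2 R)
    (u : ℝ → ℝ → ℝ → ℝ)
    (hu : ∀ v w z, u v w z = 2 * Real.log (2 * (z + R v) / (1 + v * w))) :
    ∀ v w z, 0 < z + R v → 0 < 1 + v * w →
      4 * deriv (fun v' => deriv (fun w' => u v' w' z) w) v
        + deriv (fun z' => deriv (fun z'' => Real.exp (u v w z'')) z') z = 0 := by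
  intro v w z hz hvw
  have hu_w : (fun v' => deriv (fun w' => u v' w' z) w)
      =ᶠ[𝓝 v] fun v' => -2 * (v' / (1 + v' * w)) := by
    have hR' : ∀ᶠ v' in 𝓝 v, 0 < z + R v' :=
      continuousAt_const.eventually_lt (hR.continuous.continuousAt.const_add z) hz
    have hvw' : ∀ᶠ v' in 𝓝 v, 0 < 1 + v' * w :=
      continuousAt_const.eventually_lt (by fun_prop) hvw
    filter_upwards [hR', hvw'] with v' hR' hvw'
    simp only [hu]
    rw [((hasDerivAt_log_const_div_one_add_mul _ v' w (by positivity) hvw'.ne').const_mul 2).deriv]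
    ring
  have hexp_u : (fun z' => exp (u v w z'))
      =ᶠ[𝓝 z] fun z' => (2 / (1 + v * w) * z' + 2 * R v / (1 + v * w)) ^ 2 := by
    have hz' : ∀ᶠ z' in 𝓝 z, 0 < z' + R v := continuousAt_const.eventually_lt (by fun_prop) hz
    filter_upwards [hz'] with z' hz'
    rw [hu, exp_two_mul_log (by positivity)]
    ring
  rw [hu_w.deriv_eq, deriv_const_mul _ (hasDerivAt_div_one_add_mul v w hvw.ne').differentiableAt,
    (hasDerivAt_div_one_add_mul v w hvw.ne').deriv, hexp_u.deriv.deriv_eq, deriv_deriv_sq_mul_add]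
  field_simp
  ring
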